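/- Let Q_q = [[b, b/a], [1, 0]] with a, b nonzero reals. For even n, trace(Q_q^n ∘ Q_q^(−n)) = 2(1 + (b/a) q_n²), and for odd n, trace(Q_q^n ∘ Q_q^(−n)) = 2(1 − q_n²), where ∘ is the Hadamard product and q_n the n-th bi-periodic Fibonacci number. -/

import Mathlib

/-!
For an invertible `2 × 2` matrix `M`, the diagonal of `M ⊙ M⁻¹` is `M₀₀ M₁₁ / det M` twice, so the
trace is `2 (1 + M₀₁ M₁₀ / det M)`. For `M = Q^n` with `c = b / a` one has `det M = (-c)^n`,
`M₀₁ = c M₁₀` and `M₁₀ = c^⌊n/2⌋ q_n`, the last two because all entries of `Q^n` satisfy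
`p (n+2) = b p (n+1) + c p n` (Cayley–Hamilton). The parity of `n` fixes the sign of `det M`, and the
powers of `c` cancel.
-/

/-- Bi-periodic Fibonacci sequence: q 0 = 0, q 1 = 1,
    q n = a * q (n-1) + q (n-2) if n even, q n = b * q (n-1) + q (n-2) if n odd. -/
def bpFib (a b : ℝ) : ℕ → ℝ
  | 0 => 0
  | 1 => 1
  | n + 2 => (if Even (n + 2) then a else b) * bpFib a b (n + 1) + bpFib a b n

/-- Bi-periodic Lucas sequence: l 0 = 2, l 1 = a,
    l n = b * l (n-1) + l (n-2) if n even, l n = a * l (n-1) + l (n-2) if n odd. -/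
def bpLucas (a b : ℝ) : ℕ → ℝ
  | 0 => 2
  | 1 => a
  | n + 2 => (if Even (n + 2) then b else a) * bpLucas a b (n + 1) + bpLucas a b n

open Matrix

lemma bpFib_add_two (a b : ℝ) (n : ℕ) :
    bpFib a b (n + 2) = (if Even n then a else b) * bpFib a b (n + 1) + bpFib a b n := by
  simp [bpFib, Nat.even_add]

section Companion

variable {R : Type*} [CommRing R] (b c : R)

def companion₂ : Matrix (Fin 2) (Fin 2) R := !![b, c; 1, 0]

theorem companion₂_sq : companion₂ b c ^ 2 = b • companion₂ b c + c • 1 := by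
  ext i j
  fin_cases i <;> fin_cases j <;> simp [companion₂, sq, Matrix.mul_apply, Fin.sum_univ_two]

theorem companion₂_pow_add_two (n : ℕ) :
    companion₂ b c ^ (n + 2) = b • companion₂ b c ^ (n + 1) + c • companion₂ b c ^ n := by
  rw [pow_add, companion₂_sq, mul_add, mul_smul_comm, mul_smul_comm, pow_succ, mul_one]

theorem companion₂_pow_apply_zero_one (n : ℕ) :
    (companion₂ b c ^ n) 0 1 = c * (companion₂ b c ^ n) 1 0 := by
  induction n using Nat.twoStepInduction with
  | zero => simp
  | one => simp [companion₂]
  | more n ih₀ ih₁ =>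
    simp only [companion₂_pow_add_two, Matrix.add_apply, Matrix.smul_apply, smul_eq_mul, ih₀, ih₁]
    ring

theorem det_companion₂_pow (n : ℕ) : (companion₂ b c ^ n).det = (-c) ^ n := by
  rw [det_pow, companion₂, det_fin_two_of]
  ring

end Companion

theorem companion₂_pow_apply_one_zero {a : ℝ} (b : ℝ) (ha : a ≠ 0) (n : ℕ) :
    (companion₂ b (b / a) ^ n) 1 0 = (b / a) ^ (n / 2) * bpFib a b n := by
  induction n using Nat.twoStepInduction with
  | zero => simp [bpFib]
  | one => simp [companion₂, bpFib]
  | more n ih₀ ih₁ =>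
    rw [companion₂_pow_add_two, Matrix.add_apply, Matrix.smul_apply, Matrix.smul_apply,
      smul_eq_mul, smul_eq_mul, ih₀, ih₁, bpFib_add_two]
    obtain ⟨k, rfl | rfl⟩ := Nat.even_or_odd' n
    · have h₁ : (2 * k + 1) / 2 = k := by omega
      have h₂ : (2 * k + 2) / 2 = k + 1 := by omega
      simp only [h₁, h₂, Nat.mul_div_cancel_left k two_pos, even_two_mul, if_true]
      linear_combination ((b / a) ^ k * bpFib a b (2 * k + 1)) * (div_mul_cancel₀ b ha).symm
    · have h₁ : (2 * k + 1 + 1) / 2 = k + 1 := by omega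
      have h₂ : (2 * k + 1 + 2) / 2 = k + 1 := by omega
      have h₃ : (2 * k + 1) / 2 = k := by omega
      simp only [h₁, h₂, h₃, Nat.not_even_two_mul_add_one, if_false]
      ring

theorem trace_hadamard_inv_fin_two {K : Type*} [Field K] (M : Matrix (Fin 2) (Fin 2) K)
    (hM : M.det ≠ 0) : (M ⊙ M⁻¹).trace = 2 * (1 + M 0 1 * M 1 0 / M.det) := by
  have hdiag : (M ⊙ M⁻¹).trace = 2 * (M 0 0 * M 1 1) / M.det := by
    simp only [inv_def, Ring.inverse_eq_inv', adjugate_fin_two, smul_of, smul_cons, smul_eq_mul,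
      mul_neg, smul_empty, trace_fin_two, hadamard_apply, of_apply, cons_val', cons_val_zero,
      cons_val_fin_one, cons_val_one]
    ring
  rw [hdiag]
  rw [det_fin_two] at hM ⊢
  field_simp
  ring

theorem trace_hadamard_companion₂_pow_inv {a b : ℝ} (ha : a ≠ 0) (hb : b ≠ 0) (n : ℕ) :
    ((companion₂ b (b / a) ^ n) ⊙ (companion₂ b (b / a) ^ n)⁻¹).trace =
      2 * (1 + b / a * ((b / a) ^ (n / 2) * bpFib a b n) ^ 2 / (-(b / a)) ^ n) := by
  have hdet : (companion₂ b (b / a) ^ n).det ≠ 0 := by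
    rw [det_companion₂_pow]
    exact pow_ne_zero _ (neg_ne_zero.2 (div_ne_zero hb ha))
  rw [trace_hadamard_inv_fin_two _ hdet, det_companion₂_pow, companion₂_pow_apply_zero_one,
    companion₂_pow_apply_one_zero b ha]
  ring

theorem hadamard_trace (a b : ℝ) (ha : a ≠ 0) (hb : b ≠ 0) (n : ℕ) :
    (Even n →
      (Matrix.hadamard ((!![b, b / a; 1, 0] : Matrix (Fin 2) (Fin 2) ℝ) ^ n)
          (((!![b, b / a; 1, 0] : Matrix (Fin 2) (Fin 2) ℝ) ^ n)⁻¹)).trace =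
        2 * (1 + (b / a) * (bpFib a b n) ^ 2)) ∧
    (Odd n →
      (Matrix.hadamard ((!![b, b / a; 1, 0] : Matrix (Fin 2) (Fin 2) ℝ) ^ n)
          (((!![b, b / a; 1, 0] : Matrix (Fin 2) (Fin 2) ℝ) ^ n)⁻¹)).trace =
        2 * (1 - (bpFib a b n) ^ 2)) := by
  have htrace := trace_hadamard_companion₂_pow_inv ha hb n
  unfold companion₂ at htrace
  refine ⟨fun hn => ?_, fun hn => ?_⟩ <;> rw [htrace]
  · have hpow : (b / a) ^ n = ((b / a) ^ (n / 2)) ^ 2 := by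
      rw [← pow_mul, Nat.div_mul_cancel hn.two_dvd]
    rw [hn.neg_pow, hpow]
    field_simp
  · have hpow : (b / a) ^ n = ((b / a) ^ (n / 2)) ^ 2 * (b / a) := by
      rw [← pow_mul, ← pow_succ, Nat.div_two_mul_two_add_one_of_odd hn]
    rw [hn.neg_pow, hpow]
    field_simp
    ring
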